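/- arXiv:1905.04117 — 3 statements merged into one kernel-verified Lean document; each statement's English description precedes it below -/
import Mathlib

section
/- For a Markov controlled process with finite state space, starting from P₀ = Q and iterating P_{i+1} = {x ∈ P_i : p*_{N,P_i}(x) ≥ ε} (the stochastic backward reachable set), the sequence (P_i) is nonincreasing and converges to its limit in at most |Q| iterations; if the limit is nonempty, it is the largest N-step ε-PCIS contained in Q. -/
open Finset
open scoped Classical

variable {X U : Type*}

/-- Probability that the trajectory, starting at state `x` at time `k`, remains in `Q`
at every step `k, k+1, …, k+n`, under the Markov policy `μ`. -/
noncomputable def stayProb [Fintype X] [DecidableEq X] (T : X → U → X → ℝ)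
    (μ : ℕ → X → U) (Q : Finset X) : ℕ → ℕ → X → ℝ
  | _, 0, x => if x ∈ Q then 1 else 0
  | k, n + 1, x => if x ∈ Q then ∑ y, T x (μ k x) y * stayProb T μ Q (k + 1) n y else 0
  termination_by k n x => n

/-- Maximal `N`-step invariance probability over Markov policies. -/
noncomputable def pStar [Fintype X] [DecidableEq X] (T : X → U → X → ℝ)
    (Q : Finset X) (N : ℕ) (x : X) : ℝ :=
  sSup {p | ∃ μ : ℕ → X → U, p = stayProb T μ Q 0 N x}

/-- The iteration `P₀ = Q`, `P_{i+1} = {x ∈ P_i : p*_{N,P_i}(x) ≥ ε}`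
(the stochastic backward reachable set). -/
noncomputable def iterP [Fintype X] [DecidableEq X] (T : X → U → X → ℝ)
    (Q : Finset X) (N : ℕ) (ε : ℝ) : ℕ → Finset X
  | 0 => Q
  | i + 1 => (iterP T Q N ε i).filter fun x => ε ≤ pStar T (iterP T Q N ε i) N x

lemma stayProb_nonneg [Fintype X] [DecidableEq X] (T : X → U → X → ℝ)
    (hT : ∀ x u y, 0 ≤ T x u y) (μ : ℕ → X → U) (Q : Finset X) :
    ∀ n k x, 0 ≤ stayProb T μ Q k n x := by
  intro n
  induction n with
  | zero => intro k x; unfold stayProb; split <;> norm_num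
  | succ n ih =>
    intro k x; unfold stayProb; split
    · exact Finset.sum_nonneg fun y _ => mul_nonneg (hT _ _ _) (ih _ _)
    · exact le_refl 0

lemma stayProb_le_one [Fintype X] [DecidableEq X] (T : X → U → X → ℝ)
    (hT : ∀ x u y, 0 ≤ T x u y) (hTsum : ∀ x u, ∑ y, T x u y = 1)
    (μ : ℕ → X → U) (Q : Finset X) :
    ∀ n k x, stayProb T μ Q k n x ≤ 1 := by
  intro n
  induction n with
  | zero => intro k x; unfold stayProb; split <;> norm_num
  | succ n ih =>
    intro k x; unfold stayProb; split
    · calc ∑ y, T x (μ k x) y * stayProb T μ Q (k + 1) n y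
          ≤ ∑ y, T x (μ k x) y := by
            refine Finset.sum_le_sum fun y _ => ?_
            exact mul_le_of_le_one_right (hT _ _ _) (ih _ _)
        _ = 1 := hTsum _ _
    · norm_num

lemma stayProb_mono [Fintype X] [DecidableEq X] (T : X → U → X → ℝ)
    (hT : ∀ x u y, 0 ≤ T x u y) (μ : ℕ → X → U) {Q Q' : Finset X}
    (hQ : Q ⊆ Q') : ∀ n k x, stayProb T μ Q k n x ≤ stayProb T μ Q' k n x := by
  intro n
  induction n with
  | zero =>
    intro k x; unfold stayProb
    by_cases hx : x ∈ Q
    · simp [hx, hQ hx]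
    · simp [hx]; split <;> norm_num
  | succ n ih =>
    intro k x; unfold stayProb
    by_cases hx : x ∈ Q
    · simp only [hx, hQ hx, if_true]
      exact Finset.sum_le_sum fun y _ =>
        mul_le_mul_of_nonneg_left (ih _ _) (hT _ _ _)
    · simp only [hx, if_false]; split
      · exact Finset.sum_nonneg fun y _ =>
          mul_nonneg (hT _ _ _) (stayProb_nonneg T hT μ Q' _ _ _)
      · exact le_refl 0

lemma pStar_set_nonempty [Fintype X] [DecidableEq X] [Nonempty U] (T : X → U → X → ℝ)
    (Q : Finset X) (N : ℕ) (x : X) :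
    {p | ∃ μ : ℕ → X → U, p = stayProb T μ Q 0 N x}.Nonempty :=
  ⟨_, fun _ _ => Classical.arbitrary U, rfl⟩

lemma pStar_set_bddAbove [Fintype X] [DecidableEq X] (T : X → U → X → ℝ)
    (hT : ∀ x u y, 0 ≤ T x u y) (hTsum : ∀ x u, ∑ y, T x u y = 1)
    (Q : Finset X) (N : ℕ) (x : X) :
    BddAbove {p | ∃ μ : ℕ → X → U, p = stayProb T μ Q 0 N x} := by
  refine ⟨1, fun p hp => ?_⟩
  obtain ⟨μ, rfl⟩ := hp
  exact stayProb_le_one T hT hTsum μ Q N 0 x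

lemma pStar_mono [Fintype X] [DecidableEq X] [Nonempty U] (T : X → U → X → ℝ)
    (hT : ∀ x u y, 0 ≤ T x u y) (hTsum : ∀ x u, ∑ y, T x u y = 1)
    {Q Q' : Finset X} (hQ : Q ⊆ Q') (N : ℕ) (x : X) :
    pStar T Q N x ≤ pStar T Q' N x := by
  refine csSup_le (pStar_set_nonempty T Q N x) fun p hp => ?_
  obtain ⟨μ, rfl⟩ := hp
  exact le_trans (stayProb_mono T hT μ hQ N 0 x)
    (le_csSup (pStar_set_bddAbove T hT hTsum Q' N x) ⟨μ, rfl⟩)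

lemma iterP_succ_subset [Fintype X] [DecidableEq X] (T : X → U → X → ℝ)
    (Q : Finset X) (N : ℕ) (ε : ℝ) (i : ℕ) :
    iterP T Q N ε (i + 1) ⊆ iterP T Q N ε i := by
  rw [iterP]; exact Finset.filter_subset _ _

lemma iterP_stab [Fintype X] [DecidableEq X] (T : X → U → X → ℝ)
    (Q : Finset X) (N : ℕ) (ε : ℝ) {k : ℕ}
    (hfix : iterP T Q N ε k = iterP T Q N ε (k + 1)) :
    ∀ d, iterP T Q N ε (k + d) = iterP T Q N ε k := by
  intro d
  induction d with
  | zero => rfl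
  | succ d ih =>
    have : k + (d + 1) = (k + d) + 1 := by ring
    rw [this, iterP, ih, ← iterP, ← hfix]

/-- the sequence `P_i` is nonincreasing, stabilizes after at most `|Q|`
iterations, and if its limit is nonempty then the limit is the largest `N`-step
`ε`-PCIS contained in `Q`. -/
theorem iterP_converges_to_largest_PCIS [Fintype X] [DecidableEq X] [Fintype U] [Nonempty U]
    (T : X → U → X → ℝ) (hT : ∀ x u y, 0 ≤ T x u y)
    (hTsum : ∀ x u, ∑ y, T x u y = 1)
    (Q : Finset X) (N : ℕ) (ε : ℝ) :
    (∀ i, iterP T Q N ε (i + 1) ⊆ iterP T Q N ε i) ∧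
    (∀ j, Q.card ≤ j → iterP T Q N ε j = iterP T Q N ε Q.card) ∧
    ((iterP T Q N ε Q.card).Nonempty →
      (∀ x ∈ iterP T Q N ε Q.card, ε ≤ pStar T (iterP T Q N ε Q.card) N x) ∧
      (∀ S : Finset X, S ⊆ Q → (∀ x ∈ S, ε ≤ pStar T S N x) →
        S ⊆ iterP T Q N ε Q.card)) := by
  -- existence of a fixed point within Q.card steps
  have hfix : ∃ k ≤ Q.card, iterP T Q N ε k = iterP T Q N ε (k + 1) := by
    by_contra h
    push_neg at h
    have hlt : ∀ k ≤ Q.card, (iterP T Q N ε (k + 1)).card < (iterP T Q N ε k).card := by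
      intro k hk
      exact Finset.card_lt_card (Finset.ssubset_iff_subset_ne.mpr
        ⟨iterP_succ_subset T Q N ε k, fun he => h k hk he.symm⟩)
    have key : ∀ i, i ≤ Q.card + 1 → (iterP T Q N ε i).card + i ≤ Q.card := by
      intro i
      induction i with
      | zero => intro _; simp [iterP]
      | succ i ih =>
        intro hi
        have h1 := hlt i (by omega)
        have h2 := ih (by omega)
        omega
    have := key (Q.card + 1) le_rfl
    omega
  obtain ⟨k, hk, hfixk⟩ := hfix
  have hstab : ∀ j, k ≤ j → iterP T Q N ε j = iterP T Q N ε k := by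
    intro j hj
    obtain ⟨d, rfl⟩ := Nat.exists_eq_add_of_le hj
    exact iterP_stab T Q N ε hfixk d
  have hcard : iterP T Q N ε Q.card = iterP T Q N ε k := hstab Q.card hk
  refine ⟨iterP_succ_subset T Q N ε, ?_, ?_⟩
  · intro j hj
    rw [hstab j (le_trans hk hj), hcard]
  · intro _
    constructor
    · intro x hx
      have hfp : iterP T Q N ε (Q.card + 1) = iterP T Q N ε Q.card := by
        rw [hstab (Q.card + 1) (by omega), hcard]
      rw [iterP] at hfp
      have := Finset.filter_eq_self.mp hfp x hx
      exact this
    · intro S hSQ hS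
      have hsub : ∀ i, S ⊆ iterP T Q N ε i := by
        intro i
        induction i with
        | zero => exact hSQ
        | succ i ih =>
          intro x hx
          rw [iterP, Finset.mem_filter]
          exact ⟨ih hx, le_trans (hS x hx) (pStar_mono T hT hTsum ih N x)⟩
      exact hsub Q.card
end

section
/- Let Q be a nonempty finite set of states of a Markov decision process and 0 < ε ≤ 1. Suppose there exists a robust controlled invariant set Q_f ⊆ Q (i.e., for every x ∈ Q_f there exists u with T(Q_f|x,u) = 1) such that for every x ∈ Q \ Q_f there exists u ∈ U with T(Q_f|x,u) + ε·T(Q \ Q_f|x,u) ≥ ε. Then Q is an infinite-horizon ε-PCIS: for every x ∈ Q there exists a stationary Markov policy under which the probability that the state stays in Q forever is at least ε. -/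
open Finset

variable {X U : Type*}

/-- Probability that the trajectory starting at `x` remains in `Q` at every step
`0, …, n`, under the stationary Markov policy `μ`. -/
noncomputable def stay [Fintype X] [DecidableEq X] (T : X → U → X → ℝ)
    (μ : X → U) (Q : Finset X) : ℕ → X → ℝ
  | 0, x => if x ∈ Q then 1 else 0
  | n + 1, x => if x ∈ Q then ∑ y, T x (μ x) y * stay T μ Q n y else 0

/-- if there is a robust controlled invariant set `Qf ⊆ Q` such that
every `x ∈ Q \ Qf` admits a control `u` with `T(Qf|x,u) + ε·T(Q\Qf|x,u) ≥ ε`, then `Q`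
is an infinite-horizon `ε`-PCIS: from every `x ∈ Q` some stationary Markov policy keeps
the state in `Q` forever with probability at least `ε`. -/
theorem infinite_horizon_pcis_of_rcis [Fintype X] [DecidableEq X] [Fintype U]
    (T : X → U → X → ℝ) (Ux : X → Finset U) (hUx : ∀ x, (Ux x).Nonempty)
    (hT : ∀ x u y, 0 ≤ T x u y) (hTsum : ∀ x u, ∑ y, T x u y = 1)
    (Q Qf : Finset X) (hQne : Q.Nonempty) (hQfQ : Qf ⊆ Q)
    (ε : ℝ) (hε0 : 0 < ε) (hε1 : ε ≤ 1)
    (hRCI : ∀ x ∈ Qf, ∃ u ∈ Ux x, ∑ y ∈ Qf, T x u y = 1)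
    (hstep : ∀ x ∈ Q \ Qf, ∃ u ∈ Ux x,
      ε ≤ ∑ y ∈ Qf, T x u y + ε * ∑ y ∈ Q \ Qf, T x u y) :
    ∀ x ∈ Q, ∃ μ : X → U, (∀ z, μ z ∈ Ux z) ∧
      ε ≤ ⨅ N : ℕ, stay T μ Q N x := by
  classical
  choose uf hufU hufP using hRCI
  choose us husU husP using hstep
  set μ : X → U := fun z =>
    if h : z ∈ Qf then uf z h
    else if h2 : z ∈ Q \ Qf then us z h2
    else (hUx z).choose with hμ
  have hμU : ∀ z, μ z ∈ Ux z := by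
    intro z
    rw [hμ]
    dsimp only
    split
    · exact hufU _ _
    split
    · exact husU _ _
    exact (hUx z).choose_spec
  have hstay_nonneg : ∀ n x, 0 ≤ stay T μ Q n x := by
    intro n
    induction n with
    | zero => intro x; simp [stay]; positivity
    | succ n ih =>
        intro x
        simp only [stay]
        split
        · exact Finset.sum_nonneg fun y _ => mul_nonneg (hT _ _ _) (ih y)
        · exact le_refl 0
  have hQunion : Qf ∪ (Q \ Qf) = Q := Finset.union_sdiff_of_subset hQfQ
  have hdisj : Disjoint Qf (Q \ Qf) := Finset.disjoint_sdiff
  have key : ∀ n, (∀ x ∈ Qf, 1 ≤ stay T μ Q n x) ∧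
      (∀ x ∈ Q \ Qf, ε ≤ stay T μ Q n x) := by
    intro n
    induction n with
    | zero =>
        constructor
        · intro x hx; simp [stay, hQfQ hx]
        · intro x hx
          simp only [Finset.mem_sdiff] at hx
          simp [stay, hx.1, hε1]
    | succ n ih =>
        obtain ⟨ih1, ih2⟩ := ih
        have hsplit : ∀ x (u : U),
            ∑ y ∈ Qf, T x u y * stay T μ Q n y
              + ∑ y ∈ Q \ Qf, T x u y * stay T μ Q n y
            ≤ ∑ y, T x u y * stay T μ Q n y := by
          intro x u
          rw [← Finset.sum_union hdisj, hQunion]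
          exact Finset.sum_le_sum_of_subset_of_nonneg (Finset.subset_univ Q)
            (fun y _ _ => mul_nonneg (hT _ _ _) (hstay_nonneg n y))
        constructor
        · intro x hx
          have hxQ : x ∈ Q := hQfQ hx
          have hμx : μ x = uf x hx := by simp [hμ, hx]
          simp only [stay, if_pos hxQ, hμx]
          have h1 : ∑ y ∈ Qf, T x (uf x hx) y * 1
              ≤ ∑ y ∈ Qf, T x (uf x hx) y * stay T μ Q n y :=
            Finset.sum_le_sum fun y hy =>
              mul_le_mul_of_nonneg_left (ih1 y hy) (hT _ _ _)
          have h2 : (0:ℝ) ≤ ∑ y ∈ Q \ Qf, T x (uf x hx) y * stay T μ Q n y :=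
            Finset.sum_nonneg fun y _ => mul_nonneg (hT _ _ _) (hstay_nonneg n y)
          calc (1:ℝ) = ∑ y ∈ Qf, T x (uf x hx) y * 1 := by
                    simp [hufP x hx]
            _ ≤ ∑ y ∈ Qf, T x (uf x hx) y * stay T μ Q n y := h1
            _ ≤ _ := by linarith [hsplit x (uf x hx)]
        · intro x hx
          have hxQ : x ∈ Q := (Finset.mem_sdiff.mp hx).1
          have hxnf : x ∉ Qf := (Finset.mem_sdiff.mp hx).2
          have hμx : μ x = us x hx := by simp [hμ, hxnf, hxQ]
          simp only [stay, if_pos hxQ, hμx]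
          have h1 : ∑ y ∈ Qf, T x (us x hx) y * 1
              ≤ ∑ y ∈ Qf, T x (us x hx) y * stay T μ Q n y :=
            Finset.sum_le_sum fun y hy =>
              mul_le_mul_of_nonneg_left (ih1 y hy) (hT _ _ _)
          have h2 : ∑ y ∈ Q \ Qf, T x (us x hx) y * ε
              ≤ ∑ y ∈ Q \ Qf, T x (us x hx) y * stay T μ Q n y :=
            Finset.sum_le_sum fun y hy =>
              mul_le_mul_of_nonneg_left (ih2 y hy) (hT _ _ _)
          have := husP x hx
          have e1 : ∑ y ∈ Qf, T x (us x hx) y * 1 = ∑ y ∈ Qf, T x (us x hx) y := by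
            simp
          have e2 : ∑ y ∈ Q \ Qf, T x (us x hx) y * ε
              = ε * ∑ y ∈ Q \ Qf, T x (us x hx) y := by
            rw [Finset.mul_sum]; exact Finset.sum_congr rfl fun y _ => mul_comm _ _
          calc ε ≤ ∑ y ∈ Qf, T x (us x hx) y
                    + ε * ∑ y ∈ Q \ Qf, T x (us x hx) y := this
            _ = ∑ y ∈ Qf, T x (us x hx) y * 1
                    + ∑ y ∈ Q \ Qf, T x (us x hx) y * ε := by rw [e1, e2]
            _ ≤ ∑ y ∈ Qf, T x (us x hx) y * stay T μ Q n y
                    + ∑ y ∈ Q \ Qf, T x (us x hx) y * stay T μ Q n y := by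
                  linarith
            _ ≤ _ := hsplit x (us x hx)
  intro x hx
  refine ⟨μ, hμU, le_ciInf fun N => ?_⟩
  by_cases h : x ∈ Qf
  · linarith [(key N).1 x h]
  · exact (key N).2 x (Finset.mem_sdiff.mpr ⟨hx, h⟩)
end

section
/- Let Q be a nonempty finite set and 0 < ε ≤ 1. If Q is an infinite-horizon ε-PCIS, then there exists a robust controlled invariant set Q_f ⊆ Q such that for every x ∈ Q \ Q_f there exists u ∈ U with T(Q|x,u) ≥ ε. In particular, the set Q_f = {x ∈ Q : G*_{∞,Q}(x) = max_{y∈Q} G*_{∞,Q}(y)} satisfies G*_{∞,Q}(x) = 1 for all x ∈ Q_f and is robust controlled invariant. -/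
open Finset
open scoped Classical

variable {X U : Type*}

/-- if `Q` is an infinite-horizon `ε`-PCIS (`G*_{∞,Q} ≥ ε` on `Q`, where
`G*_{∞,Q}` is the maximal `[0,1]`-valued fixed point of the Bellman equation), then the
set `Q_f = {x ∈ Q : G*_{∞,Q}(x) = max_{y∈Q} G*_{∞,Q}(y)}` satisfies `G*_{∞,Q} = 1` on
`Q_f`, is robust controlled invariant, and every `x ∈ Q \ Q_f` admits a control `u`
with `T(Q|x,u) ≥ ε`. -/
theorem rcis_of_infinite_horizon_pcis [Fintype X] [DecidableEq X] [Fintype U]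
    (T : X → U → X → ℝ) (Ux : X → Finset U) (hUx : ∀ x, (Ux x).Nonempty)
    (hT : ∀ x u y, 0 ≤ T x u y) (hTsum : ∀ x u, ∑ y, T x u y = 1)
    (Q : Finset X) (hQne : Q.Nonempty)
    (G : X → ℝ)
    (hGbd : ∀ x ∈ Q, 0 ≤ G x ∧ G x ≤ 1)
    (hGfix : ∀ x ∈ Q, G x = (Ux x).sup' (hUx x) fun u => ∑ y ∈ Q, G y * T x u y)
    (hGmax : ∀ H : X → ℝ, (∀ x ∈ Q, 0 ≤ H x ∧ H x ≤ 1) →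
      (∀ x ∈ Q, H x = (Ux x).sup' (hUx x) fun u => ∑ y ∈ Q, H y * T x u y) →
      ∀ x ∈ Q, H x ≤ G x)
    (ε : ℝ) (hε0 : 0 < ε) (hε1 : ε ≤ 1)
    (hPCIS : ∀ x ∈ Q, ε ≤ G x) :
    (Q.filter fun x => G x = Q.sup' hQne G) ⊆ Q ∧
    (∀ x ∈ Q.filter fun x => G x = Q.sup' hQne G, G x = 1) ∧
    (∀ x ∈ Q.filter fun x => G x = Q.sup' hQne G,
      ∃ u ∈ Ux x, ∑ y ∈ Q.filter fun z => G z = Q.sup' hQne G, T x u y = 1) ∧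
    (∀ x ∈ Q \ Q.filter fun x => G x = Q.sup' hQne G,
      ∃ u ∈ Ux x, ε ≤ ∑ y ∈ Q, T x u y) := by
  classical
  set θ := Q.sup' hQne G with hθ
  obtain ⟨x0, hx0⟩ := id hQne
  have hεθ : ε ≤ θ := le_trans (hPCIS x0 hx0) (Finset.le_sup' G hx0)
  have hθpos : 0 < θ := lt_of_lt_of_le hε0 hεθ
  have hθle1 : θ ≤ 1 := Finset.sup'_le _ _ fun x hx => (hGbd x hx).2
  -- θ = 1
  have hθ1 : θ = 1 := by
    have key : ∀ x ∈ Q,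
        ((Ux x).sup' (hUx x) fun u => ∑ y ∈ Q, (G y / θ) * T x u y) =
          ((Ux x).sup' (hUx x) fun u => ∑ y ∈ Q, G y * T x u y) / θ := by
      intro x hx
      have hfu : ∀ u, ∑ y ∈ Q, (G y / θ) * T x u y = (∑ y ∈ Q, G y * T x u y) / θ := by
        intro u
        rw [Finset.sum_div]
        exact Finset.sum_congr rfl fun y _ => div_mul_eq_mul_div _ _ _
      apply le_antisymm
      · apply Finset.sup'_le
        intro u hu
        rw [hfu u]
        exact (div_le_div_iff_of_pos_right hθpos).mpr (Finset.le_sup' (fun u => ∑ y ∈ Q, G y * T x u y) hu)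
      · obtain ⟨u, hu, hequ⟩ := Finset.exists_mem_eq_sup' (hUx x)
          (fun u => ∑ y ∈ Q, G y * T x u y)
        rw [hequ, ← hfu u]
        exact Finset.le_sup' (fun u => ∑ y ∈ Q, G y / θ * T x u y) hu
    have hH : ∀ x ∈ Q, G x / θ ≤ G x := by
      apply hGmax
      · intro x hx
        exact ⟨div_nonneg (hGbd x hx).1 hθpos.le,
          div_le_one_of_le₀ (Finset.le_sup' G hx) hθpos.le⟩
      · intro x hx
        rw [key x hx, ← hGfix x hx]
    obtain ⟨xm, hxm, hxmeq⟩ := Finset.exists_mem_eq_sup' hQne G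
    have := hH xm hxm
    rw [← hxmeq, div_self hθpos.ne'] at this
    exact le_antisymm hθle1 this
  refine ⟨Finset.filter_subset _ _, ?_, ?_, ?_⟩
  · intro x hx
    rw [(Finset.mem_filter.mp hx).2, hθ1]
  · intro x hx
    obtain ⟨hxQ, hxθ⟩ := Finset.mem_filter.mp hx
    have hGx1 : G x = 1 := by rw [hxθ, hθ1]
    obtain ⟨u, hu, hequ⟩ := Finset.exists_mem_eq_sup' (hUx x)
      (fun u => ∑ y ∈ Q, G y * T x u y)
    have hsum : ∑ y ∈ Q, G y * T x u y = 1 := by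
      rw [← hequ, ← hGfix x hxQ, hGx1]
    have hQle : ∑ y ∈ Q, T x u y ≤ 1 := by
      rw [← hTsum x u]
      exact Finset.sum_le_sum_of_subset_of_nonneg (Finset.subset_univ Q)
        (fun y _ _ => hT x u y)
    have hQge : 1 ≤ ∑ y ∈ Q, T x u y := by
      calc 1 = ∑ y ∈ Q, G y * T x u y := hsum.symm
        _ ≤ ∑ y ∈ Q, T x u y :=
          Finset.sum_le_sum fun y hy => by
            nlinarith [hT x u y, (hGbd y hy).1, (hGbd y hy).2]
    have hQeq : ∑ y ∈ Q, T x u y = 1 := le_antisymm hQle hQge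
    have hzero : ∀ y ∈ Q, (1 - G y) * T x u y = 0 := by
      have hsum0 : ∑ y ∈ Q, (1 - G y) * T x u y = 0 := by
        have : ∑ y ∈ Q, (1 - G y) * T x u y =
            (∑ y ∈ Q, T x u y) - ∑ y ∈ Q, G y * T x u y := by
          rw [← Finset.sum_sub_distrib]
          exact Finset.sum_congr rfl fun y _ => by ring
        rw [this, hQeq, hsum]; ring
      exact (Finset.sum_eq_zero_iff_of_nonneg fun y hy =>
        mul_nonneg (by linarith [(hGbd y hy).2]) (hT x u y)).mp hsum0
    refine ⟨u, hu, ?_⟩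
    have hsplit := Finset.sum_filter_add_sum_filter_not Q
      (fun z => G z = θ) (fun y => T x u y)
    have hnot : ∑ y ∈ Q.filter fun z => ¬ G z = θ, T x u y = 0 := by
      apply Finset.sum_eq_zero
      intro y hy
      obtain ⟨hyQ, hyne⟩ := Finset.mem_filter.mp hy
      have h0 := hzero y hyQ
      have : (1 : ℝ) - G y ≠ 0 := by
        intro h
        exact hyne (by rw [hθ1]; linarith)
      exact (mul_eq_zero.mp h0).resolve_left this
    rw [← hsplit, hnot] at hQeq
    simpa using hQeq
  · intro x hx
    have hxQ : x ∈ Q := (Finset.mem_sdiff.mp hx).1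
    obtain ⟨u, hu, hequ⟩ := Finset.exists_mem_eq_sup' (hUx x)
      (fun u => ∑ y ∈ Q, G y * T x u y)
    refine ⟨u, hu, ?_⟩
    calc ε ≤ G x := hPCIS x hxQ
      _ = ∑ y ∈ Q, G y * T x u y := by rw [hGfix x hxQ, hequ]
      _ ≤ ∑ y ∈ Q, T x u y :=
        Finset.sum_le_sum fun y hy => by
          nlinarith [hT x u y, (hGbd y hy).1, (hGbd y hy).2]
end
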